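/- arXiv:0805.2620 — 2 statements merged into one kernel-verified Lean document; each statement's English description precedes it below -/
import Mathlib

section
/- With the notation of the alternative algorithm for Büchi games, the set Ẑ = Z \ L computed from C1, C2, X = Attr2(C1∪C2,G), Z = X∩C, D, L = Attr1(D,G↾X) equals the set Tr = S \ Attr1(B,G) computed by one iteration of the classical algorithm. -/
open Classical

universe u

structure GameGraph (S : Type u) where
  E : S → Set S
  S1 : Set S
  succ_nonempty : ∀ s, (E s).Nonempty

namespace GameGraph

variable {S : Type u} (G : GameGraph S)

/-- A (general, history-dependent) strategy: given a history and the current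
state, choose a successor. -/
abbrev Strat := { f : List S → S → S // ∀ h s, f h s ∈ G.E s }

open Classical in
/-- The pair (history so far, current state) after `n` steps of the play from
`s` where player 1 uses `σ` (at states of `S1`) and player 2 uses `π`. -/
noncomputable def playPair (σ π : List S → S → S) (s : S) : ℕ → List S × S
  | 0 => ([], s)
  | n+1 =>
      let p := playPair σ π s n
      (p.1 ++ [p.2], if p.2 ∈ G.S1 then σ p.1 p.2 else π p.1 p.2)

/-- The unique play `ω(s,σ,π)`. -/
noncomputable def play (σ π : List S → S → S) (s : S) (n : ℕ) : S :=
  (G.playPair σ π s n).2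

/-- Lift a memoryless strategy to a general one. -/
def liftML (f : S → S) : List S → S → S := fun _ s => f s

def Reach (T : Set S) : Set (ℕ → S) := { ω | ∃ k, ω k ∈ T }

def Safe (F : Set S) : Set (ℕ → S) := { ω | ∀ k, ω k ∈ F }

/-- States occurring infinitely often in a play. -/
def InfOcc (ω : ℕ → S) : Set S := { t | ∀ N, ∃ k, N ≤ k ∧ ω k = t }

def Buchi (B : Set S) : Set (ℕ → S) := { ω | (InfOcc ω ∩ B).Nonempty }

def coBuchi (C : Set S) : Set (ℕ → S) := { ω | InfOcc ω ⊆ C }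

/-- Winning set of player 1 for objective `Φ`. -/
def W1 (Φ : Set (ℕ → S)) : Set S :=
  { s | ∃ σ : G.Strat, ∀ π : G.Strat, (G.play σ.1 π.1 s) ∈ Φ }

/-- Winning set of player 2 for objective `Ψ`. -/
def W2 (Ψ : Set (ℕ → S)) : Set S :=
  { s | ∃ π : G.Strat, ∀ σ : G.Strat, (G.play σ.1 π.1 s) ∈ Ψ }

/-- `U` is closed for player 1: player-1 states of `U` have all successors in
`U`, player-2 states of `U` have some successor in `U`. -/
def Closed1 (U : Set S) : Prop :=
  (∀ s ∈ U ∩ G.S1, G.E s ⊆ U) ∧ (∀ s ∈ U \ G.S1, (G.E s ∩ U).Nonempty)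

/-- `U` is closed for player 2. -/
def Closed2 (U : Set S) : Prop :=
  (∀ s ∈ U \ G.S1, G.E s ⊆ U) ∧ (∀ s ∈ U ∩ G.S1, (G.E s ∩ U).Nonempty)

/-- The inductive attractor sequence for player 1. -/
def AttrSeq1 (U : Set S) : ℕ → Set S
  | 0 => U
  | n+1 => AttrSeq1 U n
      ∪ { s | s ∈ G.S1 ∧ (G.E s ∩ AttrSeq1 U n).Nonempty }
      ∪ { s | s ∉ G.S1 ∧ G.E s ⊆ AttrSeq1 U n }

/-- Player-1 attractor of `U`. -/
def Attr1 (U : Set S) : Set S := ⋃ n, G.AttrSeq1 U n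

/-- The inductive attractor sequence for player 2. -/
def AttrSeq2 (U : Set S) : ℕ → Set S
  | 0 => U
  | n+1 => AttrSeq2 U n
      ∪ { s | s ∉ G.S1 ∧ (G.E s ∩ AttrSeq2 U n).Nonempty }
      ∪ { s | s ∈ G.S1 ∧ G.E s ⊆ AttrSeq2 U n }

/-- Player-2 attractor of `U`. -/
def Attr2 (U : Set S) : Set S := ⋃ n, G.AttrSeq2 U n

/-- Player-1 attractor sequence computed inside the region `X`
(i.e. in the restricted game `G ↾ X`). -/
def AttrSeq1In (X U : Set S) : ℕ → Set S
  | 0 => U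
  | n+1 => AttrSeq1In X U n
      ∪ { s | s ∈ X ∧ s ∈ G.S1 ∧ (G.E s ∩ AttrSeq1In X U n).Nonempty }
      ∪ { s | s ∈ X ∧ s ∉ G.S1 ∧ G.E s ∩ X ⊆ AttrSeq1In X U n }

/-- Player-1 attractor of `U` inside the region `X`. -/
def Attr1In (X U : Set S) : Set S := ⋃ n, G.AttrSeq1In X U n

/-- Player-2 attractor sequence computed inside the region `X`. -/
def AttrSeq2In (X U : Set S) : ℕ → Set S
  | 0 => U
  | n+1 => AttrSeq2In X U n
      ∪ { s | s ∈ X ∧ s ∉ G.S1 ∧ (G.E s ∩ AttrSeq2In X U n).Nonempty }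
      ∪ { s | s ∈ X ∧ s ∈ G.S1 ∧ G.E s ∩ X ⊆ AttrSeq2In X U n }

/-- Player-2 attractor of `U` inside the region `X`. -/
def Attr2In (X U : Set S) : Set S := ⋃ n, G.AttrSeq2In X U n

end GameGraph

open GameGraph

/-! Both sets are the largest player-1 closed subset of `C`. The complement of a player-1
attractor is player-1 closed, and a player-1 closed set missing `U` misses the attractor of `U`
(induction on the stages), so `Tr` is the largest player-1 closed set inside `C = Bᶜ`.
Removing from `X` the attractor of `D` in `G ↾ X` leaves a player-1 closed set, which is `Z \ L`
because `X \ Z ⊆ D`; hence `Z \ L ⊆ Tr`. Conversely `Tr`, closed inside `C`, lies in `C1 ∪ C2`,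
so in `Z`; it misses `D` by closedness, and hence its attractor `L`. -/

namespace GameGraph

variable {S : Type u} (G : GameGraph S) {X U T : Set S} {s : S}

lemma attrSeq1_eq_attrSeq1In_univ (U : Set S) (n : ℕ) :
    G.AttrSeq1 U n = G.AttrSeq1In Set.univ U n := by
  induction n with
  | zero => rfl
  | succ n ih => simp [AttrSeq1, AttrSeq1In, ih]

lemma attr1_eq_attr1In_univ (U : Set S) : G.Attr1 U = G.Attr1In Set.univ U := by
  simp only [Attr1, Attr1In, attrSeq1_eq_attrSeq1In_univ]

lemma subset_attr1 (U : Set S) : U ⊆ G.Attr1 U :=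
  fun _ hs => Set.mem_iUnion.mpr ⟨0, hs⟩

lemma monotone_attrSeq1In (X U : Set S) : Monotone (G.AttrSeq1In X U) :=
  monotone_nat_of_le_succ fun _ _ hs => Or.inl (Or.inl hs)

lemma subset_attr1In (X U : Set S) : U ⊆ G.Attr1In X U :=
  fun _ hs => Set.mem_iUnion.mpr ⟨0, hs⟩

lemma mem_attr1In_of_mem_S1 {t : S} (hsX : s ∈ X) (hs1 : s ∈ G.S1) (ht : t ∈ G.E s)
    (htA : t ∈ G.Attr1In X U) : s ∈ G.Attr1In X U := by
  obtain ⟨n, hn⟩ := Set.mem_iUnion.mp htA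
  exact Set.mem_iUnion.mpr ⟨n + 1, Or.inl (Or.inr ⟨hsX, hs1, t, ht, hn⟩)⟩

-- Finiteness makes all successors of `s` enter the attractor by one common stage.
lemma mem_attr1In_of_not_mem_S1 [Finite S] (hsX : s ∈ X) (hs1 : s ∉ G.S1)
    (hsucc : G.E s ∩ X ⊆ G.Attr1In X U) : s ∈ G.Attr1In X U := by
  obtain ⟨n, hn⟩ := (G.monotone_attrSeq1In X U).directed_le
    |>.exists_mem_subset_of_finset_subset_biUnion (s := (G.E s ∩ X).toFinite.toFinset)
    (by simpa [Attr1In] using hsucc)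
  exact Set.mem_iUnion.mpr ⟨n + 1, Or.inr ⟨hsX, hs1, by simpa using hn⟩⟩

lemma closed1_diff_attr1In [Finite S] {D : Set S}
    (hD : ∀ s ∈ X \ D, s ∈ G.S1 → G.E s ⊆ X) : G.Closed1 (X \ G.Attr1In X D) := by
  constructor
  · rintro s ⟨⟨hsX, hsA⟩, hs1⟩ t ht
    have hsD : s ∉ D := fun h => hsA (G.subset_attr1In X D h)
    exact ⟨hD s ⟨hsX, hsD⟩ hs1 ht, fun htA => hsA (G.mem_attr1In_of_mem_S1 hsX hs1 ht htA)⟩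
  · rintro s ⟨⟨hsX, hsA⟩, hs1⟩
    by_contra hnone
    refine hsA (G.mem_attr1In_of_not_mem_S1 hsX hs1 fun t ⟨ht, htX⟩ => ?_)
    by_contra htA
    exact hnone ⟨t, ht, htX, htA⟩

lemma closed1_compl_attr1 [Finite S] (U : Set S) : G.Closed1 (G.Attr1 U)ᶜ := by
  rw [attr1_eq_attr1In_univ, Set.compl_eq_univ_sdiff]
  exact G.closed1_diff_attr1In fun _ _ _ => Set.subset_univ _

variable {G}

lemma Closed1.disjoint_attr1In (hT : G.Closed1 T) (hTX : T ⊆ X)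
    (hTU : Disjoint T U) : Disjoint T (G.Attr1In X U) := by
  suffices ∀ n, ∀ s ∈ T, s ∉ G.AttrSeq1In X U n by
    refine Set.disjoint_left.mpr fun s hs hsA => ?_
    obtain ⟨n, hn⟩ := Set.mem_iUnion.mp hsA
    exact this n s hs hn
  intro n
  induction n with
  | zero => exact fun s hs => Set.disjoint_left.mp hTU hs
  | succ n ih =>
    rintro s hs ((hn | ⟨-, hs1, t, ht, htn⟩) | ⟨-, hs1, hsucc⟩)
    · exact ih s hs hn
    · exact ih t (hT.1 s ⟨hs, hs1⟩ ht) htn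
    · obtain ⟨t, ht, htT⟩ := hT.2 s ⟨hs, hs1⟩
      exact ih t htT (hsucc ⟨ht, hTX htT⟩)

lemma Closed1.subset_compl_attr1 (hT : G.Closed1 T) (hTU : Disjoint T U) :
    T ⊆ (G.Attr1 U)ᶜ := by
  rw [attr1_eq_attr1In_univ]
  exact (hT.disjoint_attr1In (Set.subset_univ T) hTU).subset_compl_right

lemma Closed1.subset_oneStepSafe {C : Set S} (hT : G.Closed1 T) (hTC : T ⊆ C) :
    T ⊆ { s | s ∈ G.S1 ∧ s ∈ C ∧ G.E s ⊆ C }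
      ∪ { s | s ∉ G.S1 ∧ s ∈ C ∧ (G.E s ∩ C).Nonempty } := by
  intro s hs
  by_cases hs1 : s ∈ G.S1
  · exact Or.inl ⟨hs1, hTC hs, (hT.1 s ⟨hs, hs1⟩).trans hTC⟩
  · obtain ⟨t, ht, htT⟩ := hT.2 s ⟨hs, hs1⟩
    exact Or.inr ⟨hs1, hTC hs, t, ht, hTC htT⟩

end GameGraph

/-- the set `Z \ L` computed by the alternative algorithm equals
the set `Tr = S \ Attr1(B,G)` of the classical algorithm. -/
theorem ZdiffL_eq_Tr {S : Type u} [Finite S] (G : GameGraph S) (B : Set S) :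
    let C : Set S := Bᶜ
    let C1 : Set S := { s | s ∈ G.S1 ∧ s ∈ C ∧ G.E s ⊆ C }
    let C2 : Set S := { s | s ∉ G.S1 ∧ s ∈ C ∧ (G.E s ∩ C).Nonempty }
    let X : Set S := G.Attr2 (C1 ∪ C2)
    let Z : Set S := X ∩ C
    let D : Set S := { s | s ∈ G.S1 ∧ s ∈ Z ∧ (G.E s ∩ Zᶜ).Nonempty }
      ∪ { s | s ∉ G.S1 ∧ s ∈ Z ∧ G.E s ⊆ Zᶜ } ∪ (X \ Z)
    let L : Set S := G.Attr1In X D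
    Z \ L = (G.Attr1 B)ᶜ := by
  intro C C1 C2 X Z D L
  have hDL : D ⊆ L := G.subset_attr1In X D
  have hZL : Z \ L = X \ L := by
    refine Set.Subset.antisymm (Set.sdiff_subset_sdiff_left Set.inter_subset_left) ?_
    exact fun s ⟨hsX, hsL⟩ => ⟨by_contra fun hsZ => hsL (hDL (Or.inr ⟨hsX, hsZ⟩)), hsL⟩
  have hXL : G.Closed1 (X \ L) := G.closed1_diff_attr1In fun s ⟨hsX, hsD⟩ hs1 t ht => by
    have hsZ : s ∈ Z := by_contra fun hsZ => hsD (Or.inr ⟨hsX, hsZ⟩)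
    exact (by_contra fun htZ => hsD (Or.inl (Or.inl ⟨hs1, hsZ, t, ht, htZ⟩)) : t ∈ Z).1
  refine Set.Subset.antisymm ?_ fun s hs => ?_
  · rw [← hZL] at hXL
    exact hXL.subset_compl_attr1 (disjoint_compl_left.mono_left fun s hs => hs.1.2)
  have hTr := G.closed1_compl_attr1 B
  have hTrC : (G.Attr1 B)ᶜ ⊆ C := Set.compl_subset_compl.mpr (G.subset_attr1 B)
  have hTrX : (G.Attr1 B)ᶜ ⊆ X := fun s hs =>
    Set.mem_iUnion.mpr ⟨0, hTr.subset_oneStepSafe hTrC hs⟩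
  have hTrZ : (G.Attr1 B)ᶜ ⊆ Z := fun s hs => ⟨hTrX hs, hTrC hs⟩
  have hTrD : Disjoint (G.Attr1 B)ᶜ D := by
    refine Set.disjoint_left.mpr fun s hs hsD => ?_
    rcases hsD with (⟨hs1, -, t, ht, htZ⟩ | ⟨hs1, -, hsucc⟩) | ⟨-, hsZ⟩
    · exact htZ (hTrZ (hTr.1 s ⟨hs, hs1⟩ ht))
    · obtain ⟨t, ht, htTr⟩ := hTr.2 s ⟨hs, hs1⟩
      exact hsucc ht (hTrZ htTr)
    · exact hsZ (hTrZ hs)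
  exact ⟨hTrZ hs, Set.disjoint_left.mp (hTr.disjoint_attr1In hTrX hTrD) hs⟩
end

section
/- Consider the family of game graphs G_n consisting of gadgets H(0),...,H(n), where H(i) has a player-1 state t_i and a player-2 state w_i, with edges E(w_i) = {t_i, t_{i+1}} for i < n, E(w_n) = {t_n}, E(t_i) = {t_i, w_{i-1}} for i > 0, E(t_0) = {t_0}, and Büchi set B = { w_i | 0 ≤ i ≤ n }. Then the winning set of player 2 for coBuchi(S\B) is the entire state space: W2(coBuchi(S\B)) = S, and in particular player 1 wins Buchi(B) from no state. -/
open Classical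

universe u

open GameGraph

/-- Edges of the gadget family: `t i = Sum.inl i` (player 1),
`w i = Sum.inr i` (player 2); `E (w i) = {t i, t (i+1)}` (just `{t n}`-style
when `i = n`), `E (t i) = {t i, w (i-1)}` (just `{t 0}` when `i = 0`). -/
def gadgetE (n : ℕ) : (Fin (n+1) ⊕ Fin (n+1)) → Set (Fin (n+1) ⊕ Fin (n+1))
  | Sum.inl i => {Sum.inl i} ∪ { x | ∃ j : Fin (n+1), x = Sum.inr j ∧ (j : ℕ) + 1 = (i : ℕ) }
  | Sum.inr i => {Sum.inl i} ∪ { x | ∃ j : Fin (n+1), x = Sum.inl j ∧ (j : ℕ) = (i : ℕ) + 1 }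

/-- The gadget game graph consisting of `H(0), …, H(n)`. -/
def gadgetGame (n : ℕ) : GameGraph (Fin (n+1) ⊕ Fin (n+1)) where
  E := gadgetE n
  S1 := Set.range Sum.inl
  succ_nonempty := by
    rintro (i | i) <;> exact ⟨Sum.inl i, Or.inl rfl⟩

/-!
Player 2 wins by always retreating from `w i` to `t i`. Rank `t i` by `2 i` and `w i` by `2 i + 1`:
player 1 can only stay at `t i` or step down to `w (i-1)`, and player 2's retreat strictly lowers
the rank. Along every play the rank is therefore non-increasing and drops at each visit to `B`,
so `B` is visited only finitely often.
-/

namespace GameGraph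

variable {S : Type u}

theorem mem_coBuchi_compl_of_rank {α : Type*} [PartialOrder α] [WellFoundedLT α]
    {B : Set S} {ω : ℕ → S} (r : S → α) (hle : ∀ k, r (ω (k + 1)) ≤ r (ω k))
    (hlt : ∀ k, ω k ∈ B → r (ω (k + 1)) < r (ω k)) :
    ω ∈ coBuchi Bᶜ := by
  obtain ⟨N, hN⟩ :=
    WellFoundedLT.antitone_chain_condition (f := r ∘ ω) (antitone_nat_of_succ_le hle)
  intro b hb hbB
  obtain ⟨k, hNk, rfl⟩ := hb N
  have hdrop : (r ∘ ω) (k + 1) < (r ∘ ω) k := hlt k hbB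
  rw [← hN k hNk, ← hN (k + 1) (by omega)] at hdrop
  exact lt_irrefl _ hdrop

theorem disjoint_buchi_coBuchi_compl (B : Set S) : Disjoint (Buchi B) (coBuchi Bᶜ) :=
  Set.disjoint_left.2 fun _ ⟨_, hinf, hB⟩ hco => hco hinf hB

variable (G : GameGraph S)

theorem disjoint_W1_W2 {Φ Ψ : Set (ℕ → S)} (h : Disjoint Φ Ψ) : Disjoint (G.W1 Φ) (G.W2 Ψ) :=
  Set.disjoint_left.2 fun _ ⟨σ, hσ⟩ ⟨π, hπ⟩ => Set.disjoint_left.1 h (hσ π) (hπ σ)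

def memoryless (f : S → S) (hf : ∀ s, f s ∈ G.E s) : G.Strat :=
  ⟨liftML f, fun _ s => hf s⟩

def StepAllowedBy (f : S → S) (s t : S) : Prop :=
  t ∈ G.E s ∧ (s ∉ G.S1 → t = f s)

theorem play_succ (σ π : List S → S → S) (s : S) (k : ℕ) :
    G.play σ π s (k + 1) =
      if G.play σ π s k ∈ G.S1 then σ (G.playPair σ π s k).1 (G.play σ π s k)
      else π (G.playPair σ π s k).1 (G.play σ π s k) :=
  rfl

theorem stepAllowedBy_play (σ : G.Strat) {f : S → S} (hf : ∀ s, f s ∈ G.E s) (s : S) (k : ℕ) :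
    G.StepAllowedBy f (G.play σ.1 (liftML f) s k) (G.play σ.1 (liftML f) s (k + 1)) := by
  rw [StepAllowedBy, play_succ]
  split_ifs with hS1
  · exact ⟨σ.2 _ _, absurd hS1⟩
  · exact ⟨hf _, fun _ => rfl⟩

theorem W2_coBuchi_compl_eq_univ_of_rank {α : Type*} [PartialOrder α] [WellFoundedLT α]
    {B : Set S} {f : S → S} (hf : ∀ s, f s ∈ G.E s) (r : S → α)
    (hr : ∀ s t, G.StepAllowedBy f s t → r t ≤ r s ∧ (s ∈ B → r t < r s)) :
    G.W2 (coBuchi Bᶜ) = Set.univ :=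
  Set.eq_univ_of_forall fun s => ⟨G.memoryless f hf, fun σ =>
    mem_coBuchi_compl_of_rank r (fun k => (hr _ _ (G.stepAllowedBy_play σ hf s k)).1)
      (fun k => (hr _ _ (G.stepAllowedBy_play σ hf s k)).2)⟩

end GameGraph

namespace Gadget

variable {n : ℕ}

def retreat : Fin (n + 1) ⊕ Fin (n + 1) → Fin (n + 1) ⊕ Fin (n + 1)
  | Sum.inl i => Sum.inl i
  | Sum.inr i => Sum.inl i

theorem retreat_mem (s : Fin (n + 1) ⊕ Fin (n + 1)) : retreat s ∈ (gadgetGame n).E s := by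
  rcases s with i | i <;> exact Or.inl rfl

def rank : Fin (n + 1) ⊕ Fin (n + 1) → ℕ
  | Sum.inl i => 2 * i
  | Sum.inr i => 2 * i + 1

theorem rank_step {s t : Fin (n + 1) ⊕ Fin (n + 1)}
    (hst : (gadgetGame n).StepAllowedBy retreat s t) :
    rank t ≤ rank s ∧ (s ∈ Set.range Sum.inr → rank t < rank s) := by
  obtain ⟨hE, hretreat⟩ := hst
  rcases s with i | i
  · refine ⟨?_, by simp⟩
    rcases hE with rfl | ⟨j, rfl, hji⟩
    · exact le_rfl
    · simp only [rank]
      omega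
  · rw [hretreat (by simp [gadgetGame])]
    simp only [retreat, rank]
    omega

end Gadget

/-- in the gadget family with Büchi set `B = {w i}`, player 2
wins `coBuchi (S \ B)` from every state, and player 1 wins `Buchi B` from no
state. -/
theorem gadget_player2_wins (n : ℕ) :
    (gadgetGame n).W2 (coBuchi (Set.range (Sum.inr : Fin (n+1) → Fin (n+1) ⊕ Fin (n+1)))ᶜ)
      = Set.univ ∧
    (gadgetGame n).W1 (Buchi (Set.range (Sum.inr : Fin (n+1) → Fin (n+1) ⊕ Fin (n+1))))
      = ∅ := by
  have hW2 := (gadgetGame n).W2_coBuchi_compl_eq_univ_of_rank Gadget.retreat_mem Gadget.rank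
    fun _ _ => Gadget.rank_step
  refine ⟨hW2, ?_⟩
  have hdisj := (gadgetGame n).disjoint_W1_W2 (disjoint_buchi_coBuchi_compl (Set.range Sum.inr))
  rwa [hW2, Set.disjoint_univ] at hdisj
end
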